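/- arXiv:1108.5942 — 5 statements merged into one kernel-verified Lean document; each statement's English description precedes it below -/
import Mathlib

section
/- Let D^{p,q} be a double complex of right R-modules (with anti-commuting differentials d^h: D^{p,q} → D^{p+1,q} and d^v: D^{p,q} → D^{p,q+1}). If every column D^{p,*} is exact, then the left truncated totalisation ltTot D (whose degree-n term is the left truncated product over p of D^{p,n-p}, i.e. sequences (x_p) with x_p = 0 for p ≪ 0, with differential d^h + d^v) is acyclic. -/
/-!
Given a left-truncated cocycle `x` of total degree `n`, a primitive `y` with `y_p = 0` for
`p < k` is built column by column, from left to right: once `y_{p-1}` satisfies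
`d^v y_{p-1} + d^h y_{p-2} = x_{p-1}`, the element `x_p - d^h y_{p-1}` is a `d^v`-cycle (by the
cocycle condition, anticommutativity and `d^h d^h = 0`), so exactness of column `p` provides
`y_p`. Left truncation is what lets the recursion start.
-/

noncomputable section

namespace Novikov
variable (S : Type*) [Semiring S]
variable (D : ℤ → ℤ → Type*) [∀ p q, AddCommGroup (D p q)] [∀ p q, Module S (D p q)]

/-- Transport along equalities of the indices of a bigraded family of modules. -/
def lcast (p p' q q' : ℤ) (h1 : p = p') (h2 : q = q') : D p q →ₗ[S] D p' q' := by
  subst h1; subst h2; exact LinearMap.id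

variable (dh : ∀ p q, D p q →ₗ[S] D (p + 1) q) (dv : ∀ p q, D p q →ₗ[S] D p (q + 1))

/-- The component at `p` of the total differential `d = d^h + d^v`, mapping degree-`n`
elements of the totalisation (families `(x_p)_p` with `x_p ∈ D^{p, n-p}`) to degree `n+1`. -/
def totalD (n : ℤ) (x : ∀ p, D p (n - p)) (p : ℤ) : D p (n + 1 - p) :=
  lcast S D p p (n - p + 1) (n + 1 - p) rfl (by ring) (dv p (n - p) (x p)) +
    lcast S D (p - 1 + 1) p (n - (p - 1)) (n + 1 - p) (by ring) (by ring)
      (dh (p - 1) (n - (p - 1)) (x (p - 1)))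

end Novikov

namespace Novikov

section Recursion

variable {C : ℤ → Type*} [∀ p, Zero (C p)]

def seqFrom (k : ℤ) (next : ∀ p, C (p - 1) → C p) (p : ℤ) : C p :=
  if p < k then 0 else next p (seqFrom k next (p - 1))
termination_by (p - k + 1).toNat
decreasing_by omega

lemma seqFrom_of_lt {k p : ℤ} (next : ∀ p, C (p - 1) → C p) (hp : p < k) :
    seqFrom k next p = 0 := by
  rw [seqFrom.eq_1, if_pos hp]

lemma seqFrom_of_le {k p : ℤ} (next : ∀ p, C (p - 1) → C p) (hp : k ≤ p) :
    seqFrom k next p = next p (seqFrom k next (p - 1)) := by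
  rw [seqFrom.eq_1, if_neg (not_lt.mpr hp)]

lemma rel_seqFrom (R : ∀ p, C (p - 1) → C p → Prop) {k : ℤ} (base : ∀ p < k, R p 0 0)
    {next : ∀ p, C (p - 1) → C p}
    (hnext : ∀ p a b, R (p - 1) a b → R p b (next p b)) (p : ℤ) :
    R p (seqFrom k next (p - 1)) (seqFrom k next p) := by
  by_cases hp : p < k
  · rw [seqFrom_of_lt next hp, seqFrom_of_lt next (by omega)]
    exact base p hp
  · rw [seqFrom_of_le next (not_lt.mp hp)]
    exact hnext p _ _ (rel_seqFrom R base hnext (p - 1))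
termination_by (p - k + 1).toNat
decreasing_by omega

theorem exists_seq_rel_of_forall_exists (R : ∀ p, C (p - 1) → C p → Prop) (k : ℤ)
    (base : ∀ p < k, R p 0 0) (step : ∀ p a b, R (p - 1) a b → ∃ c, R p b c) :
    ∃ y : ∀ p, C p, (∀ p < k, y p = 0) ∧ ∀ p, R p (y (p - 1)) (y p) := by
  classical
  let next : ∀ p, C (p - 1) → C p := fun p b => if h : ∃ c, R p b c then h.choose else 0
  have hnext : ∀ p a b, R (p - 1) a b → R p b (next p b) := fun p a b hab => by
    simpa only [next, dif_pos (step p a b hab)] using (step p a b hab).choose_spec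
  exact ⟨seqFrom k next, fun p hp => seqFrom_of_lt next hp, rel_seqFrom R base hnext⟩

end Recursion

section DoubleComplex

variable {S : Type*} [Semiring S]
variable {D : ℤ → ℤ → Type*} [∀ p q, AddCommGroup (D p q)] [∀ p q, Module S (D p q)]

@[simp]
lemma lcast_lcast {p p' p'' q q' q'' : ℤ} (h1 : p = p') (h2 : q = q') (h1' : p' = p'')
    (h2' : q' = q'') (v : D p q) :
    lcast S D p' p'' q' q'' h1' h2' (lcast S D p p' q q' h1 h2 v) =
      lcast S D p p'' q q'' (h1.trans h1') (h2.trans h2') v := by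
  subst h1 h2 h1' h2'; rfl

@[simp]
lemma lcast_self {p q : ℤ} (h1 : p = p) (h2 : q = q) (v : D p q) :
    lcast S D p p q q h1 h2 v = v := rfl

@[simp]
lemma lcast_eq_zero {p p' q q' : ℤ} (h1 : p = p') (h2 : q = q') {v : D p q} :
    lcast S D p p' q q' h1 h2 v = 0 ↔ v = 0 := by
  subst h1 h2; rfl

variable (dh : ∀ p q, D p q →ₗ[S] D (p + 1) q) (dv : ∀ p q, D p q →ₗ[S] D p (q + 1))

lemma dv_lcast {p p' q q' : ℤ} (h1 : p = p') (h2 : q = q') (v : D p q) :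
    dv p' q' (lcast S D p p' q q' h1 h2 v) =
      lcast S D p p' (q + 1) (q' + 1) h1 (by rw [h2]) (dv p q v) := by
  subst h1 h2; rfl

lemma dh_lcast {p p' q q' : ℤ} (h1 : p = p') (h2 : q = q') (v : D p q) :
    dh p' q' (lcast S D p p' q q' h1 h2 v) =
      lcast S D (p + 1) (p' + 1) q q' (by rw [h1]) h2 (dh p q v) := by
  subst h1 h2; rfl

def vertD (m p : ℤ) : D p (m - p) →ₗ[S] D p (m + 1 - p) :=
  lcast S D p p (m - p + 1) (m + 1 - p) rfl (by ring) ∘ₗ dv p (m - p)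

def horD (m p : ℤ) : D (p - 1) (m - (p - 1)) →ₗ[S] D p (m + 1 - p) :=
  lcast S D (p - 1 + 1) p (m - (p - 1)) (m + 1 - p) (by ring) (by ring) ∘ₗ
    dh (p - 1) (m - (p - 1))

lemma totalD_apply (m : ℤ) (x : ∀ p, D p (m - p)) (p : ℤ) :
    totalD S D dh dv m x p = vertD dv m p (x p) + horD dh m p (x (p - 1)) := rfl

lemma totalD_lcast {n n' : ℤ} (h : n = n') (x : ∀ p, D p (n - p)) (p : ℤ) :
    totalD S D dh dv n' (fun p => lcast S D p p (n - p) (n' - p) rfl (by rw [h]) (x p)) p =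
      lcast S D p p (n + 1 - p) (n' + 1 - p) rfl (by rw [h]) (totalD S D dh dv n x p) := by
  subst h; rfl

variable {dh dv}

lemma horD_horD (hhh : ∀ p q (v : D p q), dh (p + 1) q (dh p q v) = 0)
    (m p : ℤ) (v : D (p - 1 - 1) (m - (p - 1 - 1))) :
    horD dh (m + 1) p (horD dh m (p - 1) v) = 0 := by
  simp only [horD, LinearMap.comp_apply, dh_lcast, hhh, map_zero]

lemma vertD_horD (hanti : ∀ p q (v : D p q), dh p (q + 1) (dv p q v) = - dv (p + 1) q (dh p q v))
    (m p : ℤ) (w : D (p - 1) (m - (p - 1))) :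
    vertD dv (m + 1) p (horD dh m p w) = - horD dh (m + 1) p (vertD dv m (p - 1) w) := by
  simp only [vertD, horD, LinearMap.comp_apply, dv_lcast, dh_lcast, lcast_lcast, hanti,
    map_neg, neg_neg]

lemma exists_vertD_eq (hcol : ∀ p q (v : D p (q + 1)), dv p (q + 1) v = 0 → ∃ u : D p q, dv p q u = v)
    {m p : ℤ} {v : D p (m + 1 - p)} (hv : vertD dv (m + 1) p v = 0) :
    ∃ u : D p (m - p), vertD dv m p u = v := by
  obtain ⟨u, hu⟩ := hcol p (m - p) (lcast S D p p (m + 1 - p) (m - p + 1) rfl (by ring) v) <| by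
    rw [dv_lcast, lcast_eq_zero]
    simpa only [vertD, LinearMap.comp_apply, lcast_eq_zero] using hv
  exact ⟨u, by simp only [vertD, LinearMap.comp_apply, hu, lcast_lcast, lcast_self]⟩

variable (hhh : ∀ p q (v : D p q), dh (p + 1) q (dh p q v) = 0)
  (hanti : ∀ p q (v : D p q), dh p (q + 1) (dv p q v) = - dv (p + 1) q (dh p q v))
  (hcol : ∀ p q (v : D p (q + 1)), dv p (q + 1) v = 0 → ∃ u : D p q, dv p q u = v)
include hhh hanti hcol

lemma exists_vertD_add_horD_eq {m : ℤ} {X : ∀ p, D p (m + 1 - p)}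
    (hX : ∀ p, totalD S D dh dv (m + 1) X p = 0) {p : ℤ} {a : D (p - 1 - 1) (m - (p - 1 - 1))}
    {b : D (p - 1) (m - (p - 1))} (hab : vertD dv m (p - 1) b + horD dh m (p - 1) a = X (p - 1)) :
    ∃ c : D p (m - p), vertD dv m p c + horD dh m p b = X p := by
  have hcycle : vertD dv (m + 1) p (X p - horD dh m p b) = 0 := by
    have hXp : vertD dv (m + 1) p (X p) = - horD dh (m + 1) p (X (p - 1)) :=
      eq_neg_of_add_eq_zero_left (hX p)
    rw [map_sub, hXp, vertD_horD hanti, ← hab, map_add, horD_horD hhh]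
    abel
  obtain ⟨c, hc⟩ := exists_vertD_eq hcol hcycle
  exact ⟨c, by rw [hc, sub_add_cancel]⟩

theorem exists_totalD_eq_of_totalD_eq_zero (m k : ℤ) (X : ∀ p, D p (m + 1 - p))
    (hXk : ∀ p < k, X p = 0) (hX : ∀ p, totalD S D dh dv (m + 1) X p = 0) :
    ∃ y : ∀ p, D p (m - p), (∀ p < k, y p = 0) ∧ ∀ p, totalD S D dh dv m y p = X p := by
  obtain ⟨y, hyk, hy⟩ := exists_seq_rel_of_forall_exists
    (fun p a b => vertD dv m p b + horD dh m p a = X p) k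
    (fun p hp => by simp only [map_zero, add_zero, hXk p hp])
    (fun _ _ _ hab => exists_vertD_add_horD_eq hhh hanti hcol hX hab)
  exact ⟨y, hyk, fun p => (totalD_apply dh dv m y p).trans (hy p)⟩

end DoubleComplex

end Novikov

open Novikov in
/-- Let `D^{p,q}` be a double complex of right `R`-modules (= left
`Rᵐᵒᵖ`-modules), with anticommuting differentials `d^h : D^{p,q} → D^{p+1,q}` and
`d^v : D^{p,q} → D^{p,q+1}`.  If every column `D^{p,*}` is exact, then the left truncated
totalisation `ltTot D` — whose degree-`n` term consists of the families `(x_p)_p` with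
`x_p ∈ D^{p,n-p}` and `x_p = 0` for `p ≪ 0`, with differential `d^h + d^v` — is acyclic:
every left-truncated cocycle is the boundary of a left-truncated element. -/
theorem ltTot_acyclic_of_exact_columns
    (R : Type*) [Ring R]
    (D : ℤ → ℤ → Type*) [∀ p q, AddCommGroup (D p q)] [∀ p q, Module Rᵐᵒᵖ (D p q)]
    (dh : ∀ p q, D p q →ₗ[Rᵐᵒᵖ] D (p + 1) q) (dv : ∀ p q, D p q →ₗ[Rᵐᵒᵖ] D p (q + 1))
    (hhh : ∀ p q (v : D p q), dh (p + 1) q (dh p q v) = 0)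
    (hanti : ∀ p q (v : D p q), dh p (q + 1) (dv p q v) = - dv (p + 1) q (dh p q v))
    (hcol : ∀ p q (v : D p (q + 1)), dv p (q + 1) v = 0 → ∃ u : D p q, dv p q u = v) :
    ∀ (n : ℤ) (x : ∀ p, D p (n - p)),
      (∃ k, ∀ p < k, x p = 0) →
      (∀ p, totalD Rᵐᵒᵖ D dh dv n x p = 0) →
      ∃ y : ∀ p, D p (n - 1 - p),
        (∃ k, ∀ p < k, y p = 0) ∧
        ∀ p, lcast Rᵐᵒᵖ D p p (n - 1 + 1 - p) (n - p) rfl (by ring)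
          (totalD Rᵐᵒᵖ D dh dv (n - 1) y p) = x p := by
  rintro n x ⟨k, hxk⟩ hx
  have hn : n = n - 1 + 1 := by ring
  let X : ∀ p, D p (n - 1 + 1 - p) := fun p => lcast Rᵐᵒᵖ D p p (n - p) _ rfl (by rw [← hn]) (x p)
  obtain ⟨y, hyk, hy⟩ := exists_totalD_eq_of_totalD_eq_zero hhh hanti hcol (n - 1) k X
    (fun p hp => by simp only [X, hxk p hp, map_zero])
    (fun p => by simp only [X, totalD_lcast dh dv hn, hx, map_zero])
  exact ⟨y, ⟨k, hyk⟩, fun p => by simp only [hy, X, lcast_lcast, lcast_self]⟩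
end
end

section
/- For the double complex D of the previous example (D^{p,-p} = D^{p,-p-1} = ℤ, horizontal differential -id, vertical differential multiplication by 2), the element 1 ∈ D^{0,0} also represents a nonzero class in H^0 of the left truncated totalisation ltTot D; in particular ltTot D is not acyclic even though the rows of D are exact. -/
noncomputable section

namespace Novikov
variable (S : Type*) [Semiring S]
variable (D : ℤ → ℤ → Type*) [∀ p q, AddCommGroup (D p q)] [∀ p q, Module S (D p q)]

variable (dh : ∀ p q, D p q →ₗ[S] D (p + 1) q) (dv : ∀ p q, D p q →ₗ[S] D p (q + 1))

/-- The example double complex of abelian groups: `D^{p,-p} = D^{p,-p-1} = ℤ`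
(realised as `Fin 1 → ℤ`), all other entries `0` (realised as `Fin 0 → ℤ`). -/
abbrev Dex (p q : ℤ) : Type := Fin (if q = -p ∨ q = -p - 1 then 1 else 0) → ℤ

lemma Dex_pos {p q : ℤ} (h : q = -p ∨ q = -p - 1) :
    0 < (if q = -p ∨ q = -p - 1 then 1 else 0) := by rw [if_pos h]; omega

/-- The horizontal differential of the example: `-id : D^{p,-p-1} → D^{p+1,-p-1}`,
and zero elsewhere. -/
def dhEx (p q : ℤ) : Dex p q →ₗ[ℤ] Dex (p + 1) q where
  toFun x j := if h : q = -p - 1 then -(x ⟨0, Dex_pos (Or.inr h)⟩) else 0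
  map_add' x y := by funext j; by_cases h : q = -p - 1 <;> simp [h, neg_add] <;> ring
  map_smul' c x := by funext j; by_cases h : q = -p - 1 <;> simp [h] <;> ring

/-- The vertical differential of the example: multiplication by `2`,
`D^{p,-p-1} → D^{p,-p}`, and zero elsewhere. -/
def dvEx (p q : ℤ) : Dex p q →ₗ[ℤ] Dex p (q + 1) where
  toFun x j := if h : q = -p - 1 then 2 * x ⟨0, Dex_pos (Or.inr h)⟩ else 0
  map_add' x y := by funext j; by_cases h : q = -p - 1 <;> simp [h] <;> ring
  map_smul' c x := by funext j; by_cases h : q = -p - 1 <;> simp [h] <;> ring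

/-- The degree-`0` cocycle of the direct-sum totalisation corresponding to
`1 ∈ D^{0,0}`. -/
def xEx : ∀ p, Dex p (0 - p) := fun p _ => if p = 0 then 1 else 0

end Novikov


/-!
Every entry of the example is `ℤ` or `0`, so a degree-`(-1)` cochain `y` is an integer sequence
`a p`, and `d y = 1 ∈ D^{0,0}` reads `2 a p - a (p - 1) = δ_{p,0}`. For `p < 0` this says
`a (p - 1) = 2 a p`, so if `a` vanishes far to the left it vanishes on all of `p < 0`, by induction
upwards; then `p = 0` gives `2 a 0 = 1`, which is impossible in `ℤ`. Without the truncation the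
equation is solved by `a p = -2 ^ (-p - 1)` for `p < 0` and `a p = 0` for `p ≥ 0`.
-/

namespace Novikov

/-- The integer coordinate of an element of `Dex p q`, and `0` off the support. -/
def val {p q : ℤ} (x : Dex p q) : ℤ :=
  if h : q = -p ∨ q = -p - 1 then x ⟨0, Dex_pos h⟩ else 0

lemma val_eq {p q : ℤ} (h : q = -p ∨ q = -p - 1) (x : Dex p q) :
    val x = x ⟨0, Dex_pos h⟩ := dif_pos h

lemma val_of_not_support {p q : ℤ} (h : ¬(q = -p ∨ q = -p - 1)) (x : Dex p q) :
    val x = 0 := dif_neg h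

lemma val_zero {p q : ℤ} : val (0 : Dex p q) = 0 := by
  unfold val; split <;> rfl

lemma val_add {p q : ℤ} (x y : Dex p q) : val (x + y) = val x + val y := by
  unfold val; split <;> simp

lemma val_injective {p q : ℤ} : Function.Injective (val : Dex p q → ℤ) := by
  intro x y h
  funext j
  have hj := j.isLt
  by_cases hq : q = -p ∨ q = -p - 1
  · have hone : (if q = -p ∨ q = -p - 1 then 1 else 0) = 1 := if_pos hq
    rw [val_eq hq, val_eq hq] at h
    rwa [show j = ⟨0, Dex_pos hq⟩ from Fin.ext (by simp only; omega)]
  · have hzero : (if q = -p ∨ q = -p - 1 then 1 else 0) = 0 := if_neg hq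
    omega

lemma val_lcast {p p' q q' : ℤ} (h1 : p = p') (h2 : q = q') (x : Dex p q) :
    val (lcast ℤ Dex p p' q q' h1 h2 x) = val x := by
  subst h1 h2; rfl

lemma val_dvEx (p q : ℤ) (x : Dex p q) :
    val (dvEx p q x) = if q = -p - 1 then 2 * val x else 0 := by
  unfold val
  by_cases h : q = -p - 1 <;> simp [h, dvEx]

lemma val_dhEx (p q : ℤ) (x : Dex p q) :
    val (dhEx p q x) = if q = -p - 1 then -val x else 0 := by
  unfold val
  by_cases h : q = -p - 1
  · simp [h, dhEx]; omega
  · simp [h, dhEx]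

lemma val_totalD (n : ℤ) (y : ∀ p, Dex p (n - p)) (p : ℤ) :
    val (totalD ℤ Dex dhEx dvEx n y p) =
      (if n - p = -p - 1 then 2 * val (y p) else 0) +
      (if n - (p - 1) = -(p - 1) - 1 then -val (y (p - 1)) else 0) := by
  rw [totalD, val_add, val_lcast, val_lcast, val_dvEx, val_dhEx]

lemma val_xEx (p : ℤ) : val (xEx p) = if p = 0 then 1 else 0 :=
  val_eq (Or.inl (by omega)) _

theorem dhEx_exact (p q : ℤ) (v : Dex (p + 1) q) (hv : dhEx (p + 1) q v = 0) :
    ∃ u : Dex p q, dhEx p q u = v := by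
  by_cases h : q = -p - 1
  · refine ⟨fun _ => -val v, val_injective ?_⟩
    rw [val_dhEx, if_pos h, val_eq (Or.inr h), neg_neg]
  · refine ⟨0, val_injective ?_⟩
    rw [map_zero, val_zero]
    by_cases h' : q = -(p + 1) - 1
    · have hv' := congrArg val hv
      rwa [val_dhEx, if_pos h', val_zero, neg_eq_zero, eq_comm] at hv'
    · exact (val_of_not_support (by omega) v).symm

theorem totalD_xEx (p : ℤ) : totalD ℤ Dex dhEx dvEx 0 xEx p = 0 := by
  apply val_injective
  rw [val_totalD, if_neg (by omega), if_neg (by omega), val_zero, add_zero]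

lemma eq_zero_of_sub_one_eq_mul {R : Type*} [MulZeroClass R] [NoZeroDivisors R] {c : R}
    (hc : c ≠ 0) {f : ℤ → R} {m : ℤ} (hf : ∀ p < m, f (p - 1) = c * f p)
    (hk : ∃ k, ∀ p < k, f p = 0) : ∀ p < m, f p = 0 := by
  obtain ⟨k, hk⟩ := hk
  intro p hp
  rcases lt_or_ge p (k - 1) with hpk | hpk
  · exact hk p (by omega)
  induction p, hpk using Int.leInduction with
  | base => exact hk _ (by omega)
  | succ n _ ih =>
    have hn := hf (n + 1) hp
    rw [add_sub_cancel_right, ih (by omega)] at hn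
    exact (mul_eq_zero.mp hn.symm).resolve_left hc

theorem xEx_not_ltTot_coboundary :
    ¬ ∃ y : ∀ p, Dex p (0 - 1 - p), (∃ k, ∀ p < k, y p = 0) ∧
        ∀ p, lcast ℤ Dex p p (0 - 1 + 1 - p) (0 - p) rfl (by ring)
          (totalD ℤ Dex dhEx dvEx (0 - 1) y p) = xEx p := by
  rintro ⟨y, ⟨k, hk⟩, hy⟩
  have hrec (p : ℤ) : 2 * val (y p) - val (y (p - 1)) = if p = 0 then 1 else 0 := by
    have h := congrArg val (hy p)
    rw [val_lcast, val_totalD, if_pos (by omega), if_pos (by omega), val_xEx] at h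
    rw [← h]; ring
  have hneg : ∀ p < 0, val (y p) = 0 :=
    eq_zero_of_sub_one_eq_mul two_ne_zero
      (fun p hp => by have := hrec p; rw [if_neg hp.ne] at this; omega)
      ⟨k, fun p hp => by rw [hk p hp, val_zero]⟩
  have h0 := hrec 0
  rw [if_pos rfl, hneg (0 - 1) (by norm_num)] at h0
  omega

end Novikov

open Novikov in
/-- For the same double complex (`D^{p,-p} = D^{p,-p-1} = ℤ`, horizontal
differential `-id`, vertical differential multiplication by `2`), the element `1 ∈ D^{0,0}`
also represents a nonzero class in `H^0` of the left truncated totalisation `ltTot D`: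
it is a cocycle which is not the boundary of any left-truncated element, even though the
rows of `D` are exact. -/
theorem ltTot_not_acyclic :
    (∀ p q (v : Dex (p + 1) q), dhEx (p + 1) q v = 0 → ∃ u : Dex p q, dhEx p q u = v) ∧
    (∀ p, totalD ℤ Dex dhEx dvEx 0 xEx p = 0) ∧
    ¬ ∃ y : ∀ p, Dex p (0 - 1 - p), (∃ k, ∀ p < k, y p = 0) ∧
        ∀ p, lcast ℤ Dex p p (0 - 1 + 1 - p) (0 - p) rfl (by ring)
          (totalD ℤ Dex dhEx dvEx (0 - 1) y p) = xEx p :=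
  ⟨dhEx_exact, totalD_xEx, xEx_not_ltTot_coboundary⟩
end
end

section
/- Let R be a ring with unit and M a finitely presented right R-module. Then the natural map Φ_M : M ⊗_R R((z)) → M((z)), m ⊗ Σ_{i≥k} r_i z^i ↦ Σ_{i≥k} m r_i z^i, is an R((z))-linear isomorphism. -/
noncomputable section
open scoped TensorProduct

namespace Novikov
variable (Γ : Type*) [AddCommGroup Γ] [LinearOrder Γ] [IsOrderedAddMonoid Γ] (R : Type*) [CommRing R]

/-- `R((z))` acting on itself commutes with the `R`-action. -/
instance : SMulCommClass R (HahnSeries Γ R) (HahnSeries Γ R) where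
  smul_comm r x y := by
    rw [← HahnSeries.C_mul_eq_smul, ← HahnSeries.C_mul_eq_smul, smul_eq_mul, smul_eq_mul,
      mul_left_comm]

variable (M : Type*) [AddCommGroup M] [Module R M]

/-- The formal series `Σ_i (r_i • m) z^i`, for `f = Σ_i r_i z^i`. -/
def phiSeries (f : HahnSeries Γ R) (m : M) : HahnSeries Γ M :=
  ⟨fun i => f.coeff i • m, f.isPWO_support.mono (fun i hi h => by
    simp only [Function.mem_support] at hi
    exact hi (by rw [h, zero_smul]))⟩

@[simp] lemma phiSeries_coeff (f : HahnSeries Γ R) (m : M) (i : Γ) :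
    (phiSeries Γ R M f m).coeff i = f.coeff i • m := rfl

/-- The natural map `M ⊗_R R((z)) → M((z))`, `m ⊗ Σ r_i z^i ↦ Σ (m r_i) z^i`
(written with the scalar factor on the left, as is usual for base change). -/
def Phi : HahnSeries Γ R ⊗[R] M →ₗ[R] HahnSeries Γ M :=
  TensorProduct.lift
    { toFun := fun f =>
        { toFun := phiSeries Γ R M f
          map_add' := fun m m' => by
            ext i; simp only [phiSeries_coeff, HahnSeries.coeff_add, smul_add]
          map_smul' := fun r m => by
            ext i; simp only [phiSeries_coeff, RingHom.id_apply, HahnSeries.coeff_smul,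
              smul_comm r] }
      map_add' := fun f g => by
        ext m i
        simp only [LinearMap.coe_mk, AddHom.coe_mk, LinearMap.add_apply, phiSeries_coeff,
          HahnSeries.coeff_add, add_smul]
      map_smul' := fun r f => by
        ext m i
        simp only [LinearMap.coe_mk, AddHom.coe_mk, RingHom.id_apply, LinearMap.smul_apply,
          phiSeries_coeff, HahnSeries.coeff_smul, smul_assoc] }

@[simp] lemma Phi_tmul (f : HahnSeries Γ R) (m : M) :
    Phi Γ R M (f ⊗ₜ[R] m) = phiSeries Γ R M f m := rfl

end Novikov

/-!
`Φ` is natural in `M`, and reading off coefficients is an exact functor `M ↦ M((z))`, while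
`R((z)) ⊗_R -` is right exact. For `M = Rⁿ`, after splitting both sides into coordinates, `Φ`
becomes the canonical isomorphism `R((z)) ⊗_R Rⁿ ≅ R((z))ⁿ`. Naturality then makes `Φ` surjective
on every finitely generated module, and for a presentation `0 → K → Rⁿ → M → 0` with `K` finitely
generated the five lemma shows that `Φ_M` is bijective. Finally `Φ(f ⊗ m) = f • m`, so `Φ` is
`R((z))`-linear.
-/

open TensorProduct Function

namespace Novikov

section Map

variable {Γ R M N P : Type*} [PartialOrder Γ] [Semiring R] [AddCommMonoid M] [Module R M]
  [AddCommMonoid N] [Module R N] [AddCommMonoid P] [Module R P]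

def lmap (l : M →ₗ[R] N) : HahnSeries Γ M →ₗ[R] HahnSeries Γ N where
  toFun x := x.map l
  map_add' x y := by ext; simp
  map_smul' r x := by ext; simp

@[simp] lemma coeff_lmap (l : M →ₗ[R] N) (x : HahnSeries Γ M) (i : Γ) :
    (lmap l x).coeff i = l (x.coeff i) := rfl

lemma mem_range_lmap_of_forall_coeff_mem {l : M →ₗ[R] N} {x : HahnSeries Γ N}
    (h : ∀ i, x.coeff i ∈ LinearMap.range l) : x ∈ Set.range (lmap l) := by
  choose y hy using h
  refine ⟨⟨x.support.indicator y, x.isPWO_support.mono Set.support_indicator_subset⟩, ?_⟩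
  ext i
  by_cases hi : i ∈ x.support
  · simp [Set.indicator_of_mem hi, hy]
  · simp_all

lemma lmap_surjective {l : M →ₗ[R] N} (hl : Surjective l) : Surjective (lmap (Γ := Γ) l) :=
  fun _ ↦ mem_range_lmap_of_forall_coeff_mem fun _ ↦ hl _

lemma exact_lmap {f : M →ₗ[R] N} {g : N →ₗ[R] P} (h : Exact f g) :
    Exact (lmap (Γ := Γ) f) (lmap g) := by
  refine fun y ↦ ⟨fun hy ↦ mem_range_lmap_of_forall_coeff_mem fun i ↦ ?_, ?_⟩
  · exact (h _).mp (by simpa using congr(($hy).coeff i))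
  · rintro ⟨x, rfl⟩
    ext i
    simp [h.apply_apply_eq_zero]

end Map

section Bijective

variable (Γ : Type*) [LinearOrder Γ] (R : Type*) [CommRing R]
  {M N : Type*} [AddCommGroup M] [Module R M] [AddCommGroup N] [Module R N]

lemma lmap_comp_Phi (l : M →ₗ[R] N) :
    lmap l ∘ₗ Phi Γ R M = Phi Γ R N ∘ₗ l.lTensor (HahnSeries Γ R) := by
  ext f m i
  exact l.map_smul _ _

lemma Phi_bijective_of_pi (ι : Type*) [Finite ι] : Bijective (Phi Γ R (ι → R)) := by
  classical
  cases nonempty_fintype ι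
  let coords : HahnSeries Γ (ι → R) →ₗ[R] ι → HahnSeries Γ R :=
    LinearMap.pi fun j ↦ lmap (LinearMap.proj j)
  have coords_injective : Injective coords := fun x y h ↦ by
    ext i j
    exact congr(($h j).coeff i)
  have coords_comp_Phi :
      coords ∘ₗ Phi Γ R (ι → R) = (piScalarRight R R (HahnSeries Γ R) ι).toLinearMap := by
    ext f m j i
    exact mul_comm _ _
  refine Bijective.of_comp_left ?_ coords_injective
  rw [← LinearMap.coe_comp, coords_comp_Phi]
  exact (piScalarRight R R (HahnSeries Γ R) ι).bijective

lemma Phi_surjective [Module.Finite R M] : Surjective (Phi Γ R M) := by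
  obtain ⟨n, p, hp⟩ := Module.Finite.exists_fin' R M
  refine Surjective.of_comp (g := p.lTensor (HahnSeries Γ R)) ?_
  rw [← LinearMap.coe_comp, ← lmap_comp_Phi, LinearMap.coe_comp]
  exact (lmap_surjective hp).comp (Phi_bijective_of_pi Γ R (Fin n)).surjective

lemma Phi_bijective [Module.FinitePresentation R M] : Bijective (Phi Γ R M) := by
  obtain ⟨n, p, hp⟩ := Module.Finite.exists_fin' R M
  have : Module.Finite R (LinearMap.ker p) := .of_fg (Module.FinitePresentation.fg_ker p hp)
  -- rows `R((z)) ⊗ ker p → R((z)) ⊗ Rⁿ → R((z)) ⊗ M → 0` and `(ker p)((z)) → Rⁿ((z)) → M((z)) → 0`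
  exact LinearMap.bijective_of_surjective_of_bijective_of_right_exact
    (M₂ := HahnSeries Γ R ⊗[R] (Fin n → R)) (M₃ := HahnSeries Γ R ⊗[R] M) _ _ _ _ _ _ _
    (lmap_comp_Phi Γ R (LinearMap.ker p).subtype) (lmap_comp_Phi Γ R p)
    (lTensor_exact _ p.exact_subtype_ker_map hp) (exact_lmap p.exact_subtype_ker_map)
    (Phi_surjective Γ R) (Phi_bijective_of_pi Γ R (Fin n)) (LinearMap.lTensor_surjective _ hp)
    (lmap_surjective hp)

end Bijective

section HahnModule

variable (Γ : Type*) [AddCommGroup Γ] [LinearOrder Γ] [IsOrderedAddMonoid Γ] (R : Type*)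
  [CommRing R] (M : Type*) [AddCommGroup M] [Module R M]

lemma of_phiSeries (f : HahnSeries Γ R) (m : M) :
    HahnModule.of R (phiSeries Γ R M f m) = f • HahnModule.of R (HahnSeries.single 0 m) := by
  ext i
  rw [HahnModule.coeff_smul_right (Set.isPWO_singleton 0)
    (by simpa using HahnSeries.support_single_subset), Equiv.symm_apply_apply, phiSeries_coeff,
    Finset.sum_eq_single (i, 0)]
  · simp
  · rintro ⟨j, k⟩ hjk hne
    obtain ⟨-, rfl, rfl⟩ : _ ∧ k = 0 ∧ j + k = i := by simpa using hjk
    simp at hne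
  · intro hi
    simp_all [Finset.mem_vaddAntidiagonal]

def Phi.toHahnModule : HahnSeries Γ R ⊗[R] M →ₗ[HahnSeries Γ R] HahnModule Γ R M where
  toFun t := HahnModule.of R (Phi Γ R M t)
  map_add' s t := by simp
  map_smul' a t := by
    induction t using TensorProduct.induction_on with
    | zero => simp
    | add s t hs ht => simp only [smul_add, map_add, HahnModule.of_add, hs, ht]
    | tmul f m => simp [smul_tmul', of_phiSeries, mul_smul]

end HahnModule

end Novikov

open Novikov in
/-- For a finitely presented right `R`-module `M`, the natural map
`Φ_M : M ⊗_R R((z)) → M((z))`, `m ⊗ Σ r_i z^i ↦ Σ (m r_i) z^i`, is an `R((z))`-linear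
isomorphism. -/
theorem finitePresentation_tensor_laurentSeries_iso
    (R : Type*) [CommRing R] (M : Type*) [AddCommGroup M] [Module R M]
    [Module.FinitePresentation R M] :
    ∃ e : (LaurentSeries R ⊗[R] M) ≃ₗ[LaurentSeries R] HahnModule ℤ R M,
      ∀ (f : LaurentSeries R) (m : M),
        (HahnModule.of R).symm (e (f ⊗ₜ[R] m)) = phiSeries ℤ R M f m :=
  ⟨.ofBijective (Phi.toHahnModule ℤ R M) ((HahnModule.of R).bijective.comp (Phi_bijective ℤ R)),
    fun _ _ ↦ Equiv.symm_apply_apply _ _⟩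
end
end

section
/- Let R be a ring with unit and M a finitely presented right R-module. Then the natural map Ψ_M : M ⊗_R R((z^{-1})) → M((z^{-1})), m ⊗ Σ_{i≤k} r_i z^i ↦ Σ_{i≤k} m r_i z^i, is an R((z^{-1}))-linear isomorphism. -/
noncomputable section
open scoped TensorProduct

/-!
Write `C v` for the constant series `v z⁰`. As `f ⊗ v ↦ f • C v`, the claim is that
`C : M → M((z⁻¹))` is a base change of `M` along `R → R((z⁻¹))`. This is clear for `M = R` and
passes to finite free modules because `M ↦ M((z⁻¹))` commutes with finite products. Both
`M ↦ R((z⁻¹)) ⊗_R M` and `M ↦ M((z⁻¹))` are right exact (the latter is even exact, since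
preimages can be chosen coefficient by coefficient), so the five lemma, applied to a
presentation `R^m → R^n → M → 0`, transfers the property to `M`.
-/

open scoped HahnSeries

namespace HahnModule

variable {Γ R : Type*} [AddCommMonoid Γ] [PartialOrder Γ]

section Semiring

variable [Semiring R] {U V W : Type*} [AddCommMonoid U] [Module R U] [AddCommMonoid V] [Module R V]
  [AddCommMonoid W] [Module R W]

variable (Γ R V) in
def C : V →ₗ[R] HahnModule Γ R V where
  toFun v := of R (HahnSeries.single 0 v)
  map_add' _ _ := by simp
  map_smul' r v := congrArg (of R) (HahnSeries.single.linearMap (R := R) 0 |>.map_smul r v)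

variable [IsOrderedCancelAddMonoid Γ]

variable (Γ) in
def map (g : V →ₗ[R] W) : HahnModule Γ R V →ₗ[R⟦Γ⟧] HahnModule Γ R W where
  toFun x := of R (((of R).symm x).map g)
  map_add' _ _ := by ext; simp
  map_smul' x y := by
    ext a
    simp only [RingHom.id_apply, Equiv.symm_apply_apply, HahnSeries.map_coeff]
    rw [coeff_smul, coeff_smul_right (y := of R (((of R).symm y).map g))
      ((of R).symm y).isPWO_support (HahnSeries.support_map_subset _ g.toAddMonoidHom.toZeroHom)]
    simp [map_sum]

@[simp] theorem coeff_map (g : V →ₗ[R] W) (x : HahnModule Γ R V) (a : Γ) :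
    ((of R).symm (map Γ g x)).coeff a = g (((of R).symm x).coeff a) := rfl

theorem map_C (g : V →ₗ[R] W) (v : V) : map Γ g (C Γ R V v) = C Γ R W (g v) :=
  congrArg (of R) (HahnSeries.map_single g.toAddMonoidHom.toZeroHom)

theorem C_comp (g : V →ₗ[R] W) : C Γ R W ∘ₗ g = (map Γ g).restrictScalars R ∘ₗ C Γ R V :=
  LinearMap.ext fun v ↦ (map_C g v).symm

theorem coeff_smul_C (x : R⟦Γ⟧) (v : V) (a : Γ) :
    ((of R).symm (x • C Γ R V v)).coeff a = x.coeff a • v := by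
  have hx : x • C Γ R R 1 = of R x :=
    (of R).symm.injective ((HahnSeries.of_symm_smul_of_eq_mul (y := 1)).trans (mul_one x))
  have hv : x • C Γ R V v = map Γ (LinearMap.toSpanSingleton R V v) (of R x) := by
    rw [← hx, LinearMap.map_smul, map_C, LinearMap.toSpanSingleton_apply, one_smul]
  rw [hv, coeff_map, LinearMap.toSpanSingleton_apply]
  rfl

theorem exists_map_eq_of_forall_coeff_mem_range (g : V →ₗ[R] W) (y : HahnModule Γ R W)
    (hy : ∀ a, ((of R).symm y).coeff a ∈ Set.range g) : ∃ x, map Γ g x = y := by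
  classical
  -- A section of `g` sending `0` to `0` keeps the preimage's support inside that of `y`.
  let s : ZeroHom W V :=
    ⟨fun w ↦ if h : w ≠ 0 ∧ w ∈ Set.range g then h.2.choose else 0, by simp⟩
  have hs : ∀ w ∈ Set.range g, g (s w) = w := by
    intro w hw
    by_cases hw0 : w = 0
    · simp [s, hw0]
    · simp only [s, ZeroHom.coe_mk, dif_pos (⟨hw0, hw⟩ : w ≠ 0 ∧ w ∈ Set.range g)]
      exact hw.choose_spec
  exact ⟨of R (((of R).symm y).map s), by ext a; exact hs _ (hy a)⟩

theorem map_surjective {g : V →ₗ[R] W} (hg : Function.Surjective g) :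
    Function.Surjective (map Γ g) :=
  fun y ↦ exists_map_eq_of_forall_coeff_mem_range g y fun _ ↦ hg _

theorem map_exact {f : U →ₗ[R] V} {g : V →ₗ[R] W} (hfg : Function.Exact f g) :
    Function.Exact (map Γ f) (map Γ g) := by
  intro y
  constructor
  · intro hy
    exact exists_map_eq_of_forall_coeff_mem_range f y fun a ↦
      (hfg _).1 (by simpa using congrArg (fun z ↦ ((of R).symm z).coeff a) hy)
  · rintro ⟨x, rfl⟩
    ext a
    simp [hfg.apply_apply_eq_zero]

variable (Γ R) in
def piEquiv {ι : Type*} [Finite ι] (M : ι → Type*) [∀ i, AddCommMonoid (M i)]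
    [∀ i, Module R (M i)] : HahnModule Γ R (∀ i, M i) ≃ₗ[R⟦Γ⟧] ∀ i, HahnModule Γ R (M i) :=
  .ofBijective (.pi fun i ↦ map Γ (.proj i)) <| by
    refine ⟨fun x y h ↦ ?_, fun y ↦ ?_⟩
    · ext a i
      exact congrArg (fun z ↦ ((of R).symm (z i)).coeff a) h
    · cases nonempty_fintype ι
      refine ⟨of R ⟨fun a i ↦ ((of R).symm (y i)).coeff a, ?_⟩, funext fun i ↦ rfl⟩
      refine ((Finset.univ.isPWO_sup).2 fun i _ ↦ ((of R).symm (y i)).isPWO_support).mono ?_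
      intro a ha
      obtain ⟨i, hi⟩ := Function.ne_iff.1 ha
      rw [Finset.sup_set_eq_biUnion]
      exact Set.mem_biUnion (Finset.mem_univ i) hi

variable (Γ R) in
def selfEquiv : R⟦Γ⟧ ≃ₗ[R⟦Γ⟧] HahnModule Γ R R where
  __ := of R
  map_add' _ _ := rfl
  map_smul' _ y := (of R).symm.injective (HahnSeries.of_symm_smul_of_eq_mul (y := y)).symm

end Semiring

section CommSemiring

variable [IsOrderedCancelAddMonoid Γ] [CommSemiring R]

theorem isBaseChange_C_self : IsBaseChange R⟦Γ⟧ (C Γ R R) :=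
  .of_equiv ((Algebra.TensorProduct.rid R R⟦Γ⟧ R⟦Γ⟧).toLinearEquiv ≪≫ₗ selfEquiv Γ R) fun r ↦
    congrArg (of R) (Algebra.algebraMap_eq_smul_one r).symm

theorem isBaseChange_C_pi {ι : Type*} [Finite ι] {M : ι → Type*} [∀ i, AddCommMonoid (M i)]
    [∀ i, Module R (M i)] (h : ∀ i, IsBaseChange R⟦Γ⟧ (C Γ R (M i))) :
    IsBaseChange R⟦Γ⟧ (C Γ R (∀ i, M i)) :=
  (IsBaseChange.iff_of_equiv_comm (LinearEquiv.refl R _) (piEquiv Γ R M)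
    (LinearMap.ext fun v ↦ funext fun _ ↦ (map_C _ v).symm)).mpr (IsBaseChange.pi _ h)

end CommSemiring

theorem isBaseChange_C [IsOrderedCancelAddMonoid Γ] [CommRing R] (M : Type*) [AddCommGroup M]
    [Module R M] [Module.FinitePresentation R M] : IsBaseChange R⟦Γ⟧ (C Γ R M) := by
  obtain ⟨n, m, p, k, hp, hkp⟩ := Module.FinitePresentation.exists_fin' R M
  have hfree (ι : Type) [Finite ι] : IsBaseChange R⟦Γ⟧ (C Γ R (ι → R)) :=
    isBaseChange_C_pi fun _ ↦ isBaseChange_C_self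
  exact IsBaseChange.of_right_exact R⟦Γ⟧ _ _ _ (C_comp k) (C_comp p) (hfree _) (hfree _) hkp hp
    (map_exact hkp) (map_surjective hp)

end HahnModule

open Novikov in
/-- `R((z⁻¹))` is modelled as `HahnSeries ℤᵒᵈ R`, Hahn series over the order dual of `ℤ`. -/
theorem finitePresentation_tensor_negLaurentSeries_iso
    (R : Type*) [CommRing R] (M : Type*) [AddCommGroup M] [Module R M]
    [Module.FinitePresentation R M] :
    ∃ e : (HahnSeries ℤᵒᵈ R ⊗[R] M) ≃ₗ[HahnSeries ℤᵒᵈ R] HahnModule ℤᵒᵈ R M,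
      ∀ (f : HahnSeries ℤᵒᵈ R) (m : M),
        (HahnModule.of R).symm (e (f ⊗ₜ[R] m)) = phiSeries ℤᵒᵈ R M f m :=
  ⟨(HahnModule.isBaseChange_C M).equiv, fun f m ↦ by
    ext a
    rw [IsBaseChange.equiv_tmul, HahnModule.coeff_smul_C, phiSeries_coeff]⟩
end
end

section
/- Let M be a finitely generated right R-module. Then the natural map Φ_M : M ⊗_R R((z)) → M((z)) is surjective. -/
noncomputable section
open scoped TensorProduct

/-! `Φ` is natural in the module, and a surjection `π : N → M` induces a surjection
`N((z)) → M((z))` by lifting coefficients one at a time. Hence it suffices to treat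
`N = R^n`, where a series splits into its `n` coordinate series. -/

open Function

theorem HahnSeries.map_surjective {Γ R S F : Type*} [PartialOrder Γ] [Zero R] [Zero S]
    [FunLike F R S] [ZeroHomClass F R S] {f : F} (hf : Surjective f) :
    Surjective fun x : HahnSeries Γ R => x.map f := by
  classical
  let s : ZeroHom S R := ⟨fun y => if y = 0 then 0 else surjInv hf y, if_pos rfl⟩
  refine fun y => ⟨y.map s, HahnSeries.ext <| funext fun g => ?_⟩
  by_cases hy : y.coeff g = 0
  · simp [s, hy]
  · simp [s, hy, surjInv_eq hf]

namespace Novikov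

variable {Γ : Type*} [LinearOrder Γ] {R : Type*} [CommRing R]
  {M N : Type*} [AddCommGroup M] [Module R M] [AddCommGroup N] [Module R N]

@[simp] theorem coeff_Phi_tmul (f : HahnSeries Γ R) (m : M) (i : Γ) :
    (Phi Γ R M (f ⊗ₜ m)).coeff i = f.coeff i • m :=
  rfl

theorem Phi_lTensor (π : N →ₗ[R] M) (t : HahnSeries Γ R ⊗[R] N) :
    Phi Γ R M (π.lTensor _ t) = (Phi Γ R N t).map π := by
  induction t using TensorProduct.induction_on with
  | zero => ext; simp
  | tmul f n => ext i; simp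
  | add t u ht hu => simp only [map_add, ht, hu]; ext i; simp

theorem Phi_surjective_of_surjective {π : N →ₗ[R] M} (hπ : Surjective π)
    (hN : Surjective (Phi Γ R N)) : Surjective (Phi Γ R M) := by
  intro g
  obtain ⟨G, rfl⟩ := HahnSeries.map_surjective (Γ := Γ) hπ g
  obtain ⟨t, rfl⟩ := hN G
  exact ⟨π.lTensor _ t, Phi_lTensor π t⟩

theorem Phi_pi_surjective (ι : Type*) [Fintype ι] :
    Surjective (Phi Γ R (ι → R)) := by
  classical
  intro G
  refine ⟨∑ a, G.map (LinearMap.proj a : (ι → R) →ₗ[R] R) ⊗ₜ Pi.single a 1, ?_⟩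
  ext i j
  simp [Pi.single_apply]

end Novikov

open Novikov in
/-- For a finitely generated right `R`-module `M`, the natural map
`Φ_M : M ⊗_R R((z)) → M((z))` is surjective. -/
theorem finite_tensor_laurentSeries_surjective
    (R : Type*) [CommRing R] (M : Type*) [AddCommGroup M] [Module R M]
    [Module.Finite R M] :
    Function.Surjective (Phi ℤ R M) := by
  obtain ⟨n, π, hπ⟩ := Module.Finite.exists_fin' R M
  exact Phi_surjective_of_surjective hπ (Phi_pi_surjective (Fin n))
end
end
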